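/- Let p ∈ (0,1], let g_p be the inverse of f_p(s) = (1/2) Σ_{n≥0} s^n/(1+pn) (extended by 0 on [0,1/2]), and define d_p(t) = t - g_p(t) - t(1-g_p(t))^2. If a pair of strictly increasing C^1 functions (g,d): [1/2,∞) → [0,1)×[0,∞) satisfies g(1/2)=d(1/2)=0, g'(t) = 2p·g(t)(1-g(t))^2/(1-2t+g(t)+2d(t)) and d'(t) = 2(1-p)g(t)(1-g(t)) + g(t)^2 for t > 1/2, then g = g_p and d = d_p on [1/2,∞). -/

import Mathlib

/-! With `Δ = 1 - 2t + g + 2d > 0`, the defect `E = d - (t - g - t(1 - g)²)` satisfies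
`E' = -(4pg(1 - g)/Δ) E`, so `E²` decreases from `E(1/2) = 0` and `d` is given by the formula
for `d_p`. Then `Δ = (1 - g)(1 - 2t(1 - g))`, and since `F = 2 f_p` satisfies
`p s F'(s) = 1/(1 - s) - F(s)`, the defect `F(g) - 2t` obeys a linear equation of the same
sign, so `F(g(t)) = 2t` and `g = g_p` by injectivity of `f_p`. Both coefficients blow up at
`t = 1/2`, where `Δ` vanishes; Grönwall does not apply, but the monotonicity of the squared
defect only needs their sign. -/

open Real Set

/-- `2 f_p`. -/
noncomputable def invLinearSeries (p s : ℝ) : ℝ := ∑' n : ℕ, s ^ n / (1 + p * n)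

section invLinearSeries

variable {p : ℝ}

lemma one_le_one_add_mul_natCast (hp : 0 ≤ p) (n : ℕ) : 1 ≤ 1 + p * n :=
  le_add_of_nonneg_right (mul_nonneg hp n.cast_nonneg)

lemma one_add_mul_natCast_pos (hp : 0 ≤ p) (n : ℕ) : 0 < 1 + p * n :=
  zero_lt_one.trans_le (one_le_one_add_mul_natCast hp n)

lemma invLinearSeries_zero : invLinearSeries p 0 = 1 := by
  rw [invLinearSeries, tsum_eq_single 0 fun n hn => by rw [zero_pow hn, zero_div]]
  norm_num

lemma summable_pow_div_one_add_mul (hp : 0 ≤ p) {s : ℝ} (hs : |s| < 1) :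
    Summable fun n : ℕ => s ^ n / (1 + p * n) := by
  refine (summable_geometric_of_lt_one (abs_nonneg s) hs).of_norm_bounded fun n => ?_
  have hpn := one_add_mul_natCast_pos hp n
  rw [norm_div, norm_pow, Real.norm_eq_abs, Real.norm_eq_abs, abs_of_pos hpn]
  exact div_le_self (pow_nonneg (abs_nonneg s) n) (one_le_one_add_mul_natCast hp n)

lemma hasDerivAt_invLinearSeries (hp : 0 ≤ p) {s : ℝ} (hs : |s| < 1) :
    HasDerivAt (invLinearSeries p) (∑' n : ℕ, n * s ^ (n - 1) / (1 + p * n)) s := by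
  obtain ⟨r, hsr, hr1⟩ := exists_between hs
  have hr0 : 0 < r := (abs_nonneg s).trans_lt hsr
  have hu : Summable fun n : ℕ => (n : ℝ) * r ^ (n - 1) := by
    refine ((summable_pow_mul_geometric_of_norm_lt_one 1 (r := r)
      (by rwa [Real.norm_eq_abs, abs_of_pos hr0])).mul_left r⁻¹).congr fun n => ?_
    cases n with
    | zero => simp
    | succ m => field_simp; simp [pow_succ, mul_comm]
  refine hasDerivAt_tsum_of_isPreconnected hu isOpen_Ioo (convex_Ioo (-r) r).isPreconnected
    (fun n y _ => (hasDerivAt_pow n y).div_const _) (fun n y hy => ?_)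
    (y₀ := 0) ⟨by linarith, hr0⟩ (summable_pow_div_one_add_mul hp (by simp)) (abs_lt.mp hsr)
  have hyr : |y| ≤ r := (abs_lt.mpr hy).le
  have hpn := one_add_mul_natCast_pos hp n
  rw [Real.norm_eq_abs, abs_div, abs_of_pos hpn, abs_mul, Nat.abs_cast, abs_pow]
  calc (n : ℝ) * |y| ^ (n - 1) / (1 + p * n) ≤ n * r ^ (n - 1) / (1 + p * n) := by gcongr
    _ ≤ n * r ^ (n - 1) := div_le_self (by positivity) (one_le_one_add_mul_natCast hp n)

lemma mul_tsum_deriv_invLinearSeries (hp : 0 ≤ p) {s : ℝ} (hs : |s| < 1) :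
    p * s * ∑' n : ℕ, n * s ^ (n - 1) / (1 + p * n) = (1 - s)⁻¹ - invLinearSeries p s := by
  rw [invLinearSeries, ← tsum_geometric_of_abs_lt_one hs,
    ← (summable_geometric_of_abs_lt_one hs).tsum_sub (summable_pow_div_one_add_mul hp hs),
    ← tsum_mul_left]
  refine tsum_congr fun n => ?_
  have hpn := (one_add_mul_natCast_pos hp n).ne'
  cases n with
  | zero => simp
  | succ m =>
    push_cast at hpn ⊢
    field_simp
    ring

end invLinearSeries

lemma eq_zero_of_hasDerivAt_eq_neg_mul {a : ℝ} {E c : ℝ → ℝ} (hEc : ContinuousOn E (Ici a))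
    (hEa : E a = 0) (hc : ∀ t > a, 0 ≤ c t) (hE : ∀ t > a, HasDerivAt E (-(c t * E t)) t) :
    ∀ t ∈ Ici a, E t = 0 := by
  have hanti : AntitoneOn (fun t => E t ^ 2) (Ici a) := by
    refine antitoneOn_of_hasDerivWithinAt_nonpos (convex_Ici a) (hEc.pow 2)
      (fun t ht => ((hE t (by simpa using ht)).pow 2).hasDerivWithinAt) fun t ht => ?_
    have := hc t (by simpa using ht)
    simp only [Nat.cast_ofNat, Nat.add_one_sub_one, pow_one]
    nlinarith [sq_nonneg (E t)]
  intro t ht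
  have := hanti self_mem_Ici ht ht
  simp only [hEa] at this
  exact pow_eq_zero_iff two_ne_zero |>.mp (le_antisymm (by simpa using this) (sq_nonneg _))

lemma d_eq_of_system {p : ℝ} (hp : 0 ≤ p) {g d : ℝ → ℝ}
    (hgmem : ∀ t > (1/2 : ℝ), g t ∈ Icc (0:ℝ) 1)
    (hgc : ContinuousOn g (Ici (1/2 : ℝ))) (hdc : ContinuousOn d (Ici (1/2 : ℝ)))
    (hg0 : g (1/2) = 0) (hd0 : d (1/2) = 0)
    (hpos : ∀ t > (1/2 : ℝ), 0 < 1 - 2 * t + g t + 2 * d t)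
    (hgode : ∀ t > (1/2 : ℝ),
      HasDerivAt g (2 * p * g t * (1 - g t) ^ 2 / (1 - 2 * t + g t + 2 * d t)) t)
    (hdode : ∀ t > (1/2 : ℝ),
      HasDerivAt d (2 * (1 - p) * g t * (1 - g t) + g t ^ 2) t) :
    ∀ t ∈ Ici (1/2 : ℝ), d t = t - g t - t * (1 - g t) ^ 2 := by
  have key := eq_zero_of_hasDerivAt_eq_neg_mul
    (E := fun t => d t - (t - g t - t * (1 - g t) ^ 2))
    (c := fun t => 4 * p * g t * (1 - g t) / (1 - 2 * t + g t + 2 * d t)) (by fun_prop)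
    (by simp only [hg0, hd0]; norm_num) (fun t ht => ?_) (fun t ht => ?_)
  · exact fun t ht => sub_eq_zero.mp (key t ht)
  · obtain ⟨hg, hg1⟩ := hgmem t ht
    exact div_nonneg (by nlinarith [mul_nonneg hp hg]) (hpos t ht).le
  · have hΔ := (hpos t ht).ne'
    refine ((hdode t ht).sub (((hasDerivAt_id' t).sub (hgode t ht)).sub
      ((hasDerivAt_id' t).mul (((hgode t ht).const_sub 1).pow 2)))).congr_deriv ?_
    simp only [Pi.pow_apply]
    field_simp
    ring

lemma invLinearSeries_comp_eq_two_mul {p : ℝ} (hp : 0 ≤ p) {g : ℝ → ℝ}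
    (hgmem : ∀ t ∈ Ici (1/2 : ℝ), g t ∈ Ico (0:ℝ) 1)
    (hgc : ContinuousOn g (Ici (1/2 : ℝ))) (hg0 : g (1/2) = 0)
    (hX : ∀ t > (1/2 : ℝ), 0 < 1 - 2 * t * (1 - g t))
    (hgode : ∀ t > (1/2 : ℝ),
      HasDerivAt g (2 * p * g t * (1 - g t) / (1 - 2 * t * (1 - g t))) t) :
    ∀ t ∈ Ici (1/2 : ℝ), invLinearSeries p (g t) = 2 * t := by
  have habs : ∀ t ∈ Ici (1/2 : ℝ), |g t| < 1 := fun t ht =>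
    abs_lt.mpr ⟨by linarith [(hgmem t ht).1], (hgmem t ht).2⟩
  have key := eq_zero_of_hasDerivAt_eq_neg_mul (E := fun t => invLinearSeries p (g t) - 2 * t)
    (c := fun t => 2 * (1 - g t) / (1 - 2 * t * (1 - g t)))
    (fun t ht => (((hasDerivAt_invLinearSeries hp (habs t ht)).continuousAt.comp_continuousWithinAt
      (hgc t ht)).sub (continuousWithinAt_id.const_mul 2)))
    (by simp only [hg0, invLinearSeries_zero]; norm_num) (fun t ht => ?_) (fun t ht => ?_)
  · exact fun t ht => sub_eq_zero.mp (key t ht)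
  · exact div_nonneg (by linarith [(hgmem t ht.le).2]) (hX t ht).le
  · have hs := mul_tsum_deriv_invLinearSeries hp (habs t ht.le)
    have hg1 : 1 - g t ≠ 0 := by linarith [(hgmem t ht.le).2]
    have hX' := (hX t ht).ne'
    refine (((hasDerivAt_invLinearSeries hp (habs t ht.le)).comp t (hgode t ht)).sub
      ((hasDerivAt_id' t).const_mul 2)).congr_deriv ?_
    set D := ∑' n : ℕ, n * g t ^ (n - 1) / (1 + p * n)
    generalize hXdef : 1 - 2 * t * (1 - g t) = X at hX' ⊢
    field_simp at hs ⊢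
    linear_combination hs + hXdef

theorem system_uniqueness_general (p : ℝ) (hp : p ∈ Set.Ioc (0:ℝ) 1)
    (f : ℝ → ℝ) (hf : f = fun s : ℝ => (1/2) * ∑' n : ℕ, s ^ n / (1 + p * n))
    (hbij : Set.BijOn f (Set.Ico (0:ℝ) 1) (Set.Ici (1/2 : ℝ)))
    (gp : ℝ → ℝ)
    (hgpmem : ∀ t ∈ Set.Ici (1/2 : ℝ), gp t ∈ Set.Ico (0:ℝ) 1)
    (hgpinv : ∀ t ∈ Set.Ici (1/2 : ℝ), f (gp t) = t)
    (dp : ℝ → ℝ) (hdp : dp = fun t : ℝ => t - gp t - t * (1 - gp t) ^ 2)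
    (g d : ℝ → ℝ)
    (hgmem : ∀ t ∈ Set.Ici (1/2 : ℝ), g t ∈ Set.Ico (0:ℝ) 1)
    (hgc : ContinuousOn g (Set.Ici (1/2 : ℝ)))
    (hdc : ContinuousOn d (Set.Ici (1/2 : ℝ)))
    (hg0 : g (1/2) = 0) (hd0 : d (1/2) = 0)
    (hpos : ∀ t > (1/2 : ℝ), 0 < 1 - 2 * t + g t + 2 * d t)
    (hgode : ∀ t > (1/2 : ℝ),
      HasDerivAt g (2 * p * g t * (1 - g t) ^ 2 / (1 - 2 * t + g t + 2 * d t)) t)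
    (hdode : ∀ t > (1/2 : ℝ),
      HasDerivAt d (2 * (1 - p) * g t * (1 - g t) + g t ^ 2) t) :
    ∀ t ∈ Set.Ici (1/2 : ℝ), g t = gp t ∧ d t = dp t := by
  have hp0 : 0 ≤ p := hp.1.le
  have hd := d_eq_of_system hp0 (fun t ht => Ico_subset_Icc_self (hgmem t ht.le))
    hgc hdc hg0 hd0 hpos hgode hdode
  have hg1 : ∀ t > (1/2 : ℝ), 0 < 1 - g t := fun t ht => sub_pos.2 (hgmem t ht.le).2
  have hΔ : ∀ t > (1/2 : ℝ), 1 - 2 * t + g t + 2 * d t = (1 - g t) * (1 - 2 * t * (1 - g t)) :=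
    fun t ht => by rw [hd t ht.le]; ring
  have hX : ∀ t > (1/2 : ℝ), 0 < 1 - 2 * t * (1 - g t) := fun t ht =>
    pos_of_mul_pos_right (hΔ t ht ▸ hpos t ht) (hg1 t ht).le
  have hF := invLinearSeries_comp_eq_two_mul hp0 hgmem hgc hg0 hX fun t ht =>
    (hgode t ht).congr_deriv (by rw [hΔ t ht]; field_simp [(hg1 t ht).ne', (hX t ht).ne'])
  have hfg : ∀ t ∈ Ici (1/2 : ℝ), f (g t) = t := fun t ht => by
    rw [hf]
    show 1 / 2 * invLinearSeries p (g t) = t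
    linarith [hF t ht]
  intro t ht
  have hgt : g t = gp t :=
    hbij.injOn (hgmem t ht) (hgpmem t ht) ((hfg t ht).trans (hgpinv t ht).symm)
  exact ⟨hgt, by rw [hdp, hd t ht, hgt]⟩

/-- Let `p ∈ (0,1]`, let `g_p` be the inverse of
`f_p(s) = (1/2) Σ_{n≥0} s^n/(1+pn)` on `[1/2,∞)` (extended by `0` on `[0,1/2]`) and
`d_p(t) = t - g_p(t) - t(1-g_p(t))²`. If a pair of strictly increasing C¹ functions
`(g,d) : [1/2,∞) → [0,1)×[0,∞)` satisfies `g(1/2)=d(1/2)=0`,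
`g' = 2p g(1-g)²/(1-2t+g+2d)` and `d' = 2(1-p)g(1-g)+g²` on `(1/2,∞)`, then `g = g_p`
and `d = d_p` on `[1/2,∞)`. -/
theorem system_uniqueness (p : ℝ) (hp : p ∈ Set.Ioc (0:ℝ) 1)
    (f : ℝ → ℝ) (hf : f = fun s : ℝ => (1/2) * ∑' n : ℕ, s ^ n / (1 + p * n))
    (hbij : Set.BijOn f (Set.Ico (0:ℝ) 1) (Set.Ici (1/2 : ℝ)))
    (gp : ℝ → ℝ)
    (hgp0 : ∀ t ≤ (1/2 : ℝ), gp t = 0)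
    (hgpmem : ∀ t ∈ Set.Ici (1/2 : ℝ), gp t ∈ Set.Ico (0:ℝ) 1)
    (hgpinv : ∀ t ∈ Set.Ici (1/2 : ℝ), f (gp t) = t)
    (dp : ℝ → ℝ) (hdp : dp = fun t : ℝ => t - gp t - t * (1 - gp t) ^ 2)
    (g d : ℝ → ℝ)
    (hgmono : StrictMonoOn g (Set.Ici (1/2 : ℝ)))
    (hdmono : StrictMonoOn d (Set.Ici (1/2 : ℝ)))
    (hgmem : ∀ t ∈ Set.Ici (1/2 : ℝ), g t ∈ Set.Ico (0:ℝ) 1)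
    (hdmem : ∀ t ∈ Set.Ici (1/2 : ℝ), d t ∈ Set.Ici (0:ℝ))
    (hgc : ContinuousOn g (Set.Ici (1/2 : ℝ)))
    (hdc : ContinuousOn d (Set.Ici (1/2 : ℝ)))
    (hg0 : g (1/2) = 0) (hd0 : d (1/2) = 0)
    (hpos : ∀ t > (1/2 : ℝ), 0 < 1 - 2 * t + g t + 2 * d t)
    (hgode : ∀ t > (1/2 : ℝ),
      HasDerivAt g (2 * p * g t * (1 - g t) ^ 2 / (1 - 2 * t + g t + 2 * d t)) t)
    (hdode : ∀ t > (1/2 : ℝ),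
      HasDerivAt d (2 * (1 - p) * g t * (1 - g t) + g t ^ 2) t) :
    ∀ t ∈ Set.Ici (1/2 : ℝ), g t = gp t ∧ d t = dp t :=
  system_uniqueness_general p hp f hf hbij gp hgpmem hgpinv dp hdp g d hgmem hgc hdc hg0 hd0 hpos
    hgode hdode
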